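/- Suppose G is a closed subset of [0,1]², 𝐆 = ⋆_{i=1}^∞ G is nonempty, and σ(𝐆) = 𝐆. Then ent(G) = h(σ|_𝐆), the Adler–Konheim–McAndrew topological entropy of the shift map σ restricted to the compact space 𝐆. -/

import Mathlib

open Set Filter Topology unitInterval
open scoped Classical

noncomputable section

/-- The shift map on sequences in the unit interval. -/
def shiftMap (x : ℕ → unitInterval) : ℕ → unitInterval := fun n => x (n + 1)

/-- The `m`-fold Mahavier product `⋆_{i=1}^m G` of a set `G ⊆ [0,1]²`. -/
def MahavierFin (G : Set (unitInterval × unitInterval)) (m : ℕ) :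
    Set (Fin (m + 1) → unitInterval) :=
  {x | ∀ i : Fin m, (x i.castSucc, x i.succ) ∈ G}

/-- The infinite Mahavier product `⋆_{i=1}^∞ G` of a set `G ⊆ [0,1]²`. -/
def MahavierInf (G : Set (unitInterval × unitInterval)) : Set (ℕ → unitInterval) :=
  {x | ∀ i : ℕ, (x i, x (i + 1)) ∈ G}

/-- The `m`-fold Mahavier product of `H ⊆ [0,1]^{N+1}`, a subset of `[0,1]^{mN+1}`. -/
def MahavierFinN (N : ℕ) (H : Set (Fin (N + 1) → unitInterval)) (m : ℕ) :
    Set (Fin (m * N + 1) → unitInterval) :=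
  {x | ∀ j : Fin m, (fun i : Fin (N + 1) =>
      x ⟨j.1 * N + i.1, by
        have hi : i.1 ≤ N := Nat.lt_succ_iff.mp i.2
        have hj : j.1 + 1 ≤ m := j.2
        have h : (j.1 + 1) * N ≤ m * N := Nat.mul_le_mul_right N hj
        have h2 : (j.1 + 1) * N = j.1 * N + N := by ring
        omega⟩) ∈ H}

/-- The infinite Mahavier product of `H ⊆ [0,1]^{N+1}`. -/
def MahavierInfN (N : ℕ) (H : Set (Fin (N + 1) → unitInterval)) :
    Set (ℕ → unitInterval) :=
  {x | ∀ j : ℕ, (fun i : Fin (N + 1) => x (j * N + i.1)) ∈ H}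

/-- The least cardinality of a subcollection of `U` covering `K`. -/
def coverNum {X : Type*} (K : Set X) (U : Set (Set X)) : ℕ :=
  sInf {n | ∃ F : Finset (Set X), ↑F ⊆ U ∧ F.card = n ∧ K ⊆ ⋃₀ ↑F}

/-- `α` is a minimal finite cover of `[0,1]` by open intervals: every member is open in
`[0,1]` and order-connected (an interval), `α` covers `[0,1]`, and no proper
subcollection of `α` covers `[0,1]`. -/
def IsMinimalIntervalCover (α : Finset (Set unitInterval)) : Prop :=
  (∀ u ∈ α, IsOpen u ∧ u.OrdConnected) ∧
  (⋃₀ (α : Set (Set unitInterval)) = Set.univ) ∧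
  ∀ β : Finset (Set unitInterval), β ⊆ α →
    ⋃₀ (β : Set (Set unitInterval)) = Set.univ → β = α

/-- The grid cover `α^k` of `[0,1]^k`: all products of `k` members of `α`. -/
def gridCover (α : Finset (Set unitInterval)) (k : ℕ) :
    Set (Set (Fin k → unitInterval)) :=
  {s | ∃ f : Fin k → Set unitInterval, (∀ i, f i ∈ α) ∧ s = {x | ∀ i, x i ∈ f i}}

/-- Entropy of `G ⊆ [0,1]²` relative to the cover `α`: the limit (realized as a `limsup`)
of `(1/m) log N(⋆_{i=1}^m G, α^{m+1})` if `⋆_{i=1}^∞ G ≠ ∅`, and `0` otherwise. -/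
def entOf (G : Set (unitInterval × unitInterval))
    (α : Finset (Set unitInterval)) : ENNReal :=
  if (MahavierInf G).Nonempty then
    Filter.limsup (fun m : ℕ =>
      ENNReal.ofReal
        (Real.log (coverNum (MahavierFin G m) (gridCover α (m + 1))) / m))
      Filter.atTop
  else 0

/-- Topological entropy of `G ⊆ [0,1]²`: the supremum of `entOf G α` over all minimal
open interval covers `α` of `[0,1]`. -/
def ent (G : Set (unitInterval × unitInterval)) : ENNReal :=
  ⨆ α : {α : Finset (Set unitInterval) // IsMinimalIntervalCover α}, entOf G α.1

/-- Entropy of `H ⊆ [0,1]^{N+1}` relative to the cover `α`. -/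
def entOfN (N : ℕ) (H : Set (Fin (N + 1) → unitInterval))
    (α : Finset (Set unitInterval)) : ENNReal :=
  if (MahavierInfN N H).Nonempty then
    Filter.limsup (fun m : ℕ =>
      ENNReal.ofReal
        (Real.log (coverNum (MahavierFinN N H m) (gridCover α (m * N + 1))) / m))
      Filter.atTop
  else 0

/-- Topological entropy of `H ⊆ [0,1]^{N+1}`. -/
def entN (N : ℕ) (H : Set (Fin (N + 1) → unitInterval)) : ENNReal :=
  ⨆ α : {α : Finset (Set unitInterval) // IsMinimalIntervalCover α}, entOfN N H α.1

/-- An open cover of a topological space. -/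
def IsOpenCover {X : Type*} [TopologicalSpace X] (U : Set (Set X)) : Prop :=
  (∀ u ∈ U, IsOpen u) ∧ ⋃₀ U = Set.univ

/-- The join `U ∨ T⁻¹U ∨ ⋯ ∨ T⁻ⁿU` of the open cover `U` under the map `T`. -/
def dynJoin {X : Type*} (T : X → X) (U : Set (Set X)) (n : ℕ) : Set (Set X) :=
  {s | ∃ f : Fin (n + 1) → Set X, (∀ i, f i ∈ U) ∧ s = ⋂ i, T^[i.1] ⁻¹' f i}

/-- The Adler–Konheim–McAndrew topological entropy of `T : X → X`: the supremum over all
open covers `U` of `X` of `lim (1/n) log N(X, U ∨ T⁻¹U ∨ ⋯ ∨ T⁻ⁿU)` (as a `limsup`). -/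
def akmEntropy {X : Type*} [TopologicalSpace X] (T : X → X) : ENNReal :=
  ⨆ U : {U : Set (Set X) // IsOpenCover U},
    Filter.limsup (fun n : ℕ =>
      ENNReal.ofReal (Real.log (coverNum Set.univ (dynJoin T U.1 n)) / n))
      Filter.atTop

/-!
Both entropies are growth rates of covering numbers of the projections `πₙ(𝐆) ⊆ [0,1]^{n+1}`.
Since `σ` shifts coordinates, the `n`-th join of the cover of `𝐆` by first-coordinate cylinders
over `α` is the cover by cylinders over the boxes of `α^{n+1}`, and its covering number is
`N(πₙ(𝐆), α^{n+1}) ≤ N(⋆ⁿG, α^{n+1})`.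

For `ent(G, α) ≤ h(σ)`: by compactness, paths in `G` that extend far enough have their first
`m + 1` coordinates inside a minimal cover of `πₘ(𝐆)`; cutting long paths into blocks of length
`m + 1` gives `N(⋆^{r(m+1)+t}G) ≤ N(πₘ(𝐆))^r N(⋆^tG)`, so `ent(G, α) ≤ log N(πₘ(𝐆)) / (m + 1)`
for every `m`.

For `h(σ) ≤ ent(G)`: a Lebesgue number argument refines any open cover of `𝐆` by the cylinders
over `α^{K+1}` for some `K` and some fine minimal interval cover `α`; then the `n`-th join is
refined by the cylinders over `α^{n+K+1}`, and the shift by `K` does not change growth rates.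
-/

section CoverNum

variable {X Y : Type*} {K K' : Set X} {U V : Set (Set X)}

/-- Without a finite subcover, `coverNum K U` is the junk value `sInf ∅ = 0`. -/
def HasFiniteSubcover (K : Set X) (U : Set (Set X)) : Prop :=
  ∃ F : Finset (Set X), ↑F ⊆ U ∧ K ⊆ ⋃₀ ↑F

theorem Set.Finite.hasFiniteSubcover (hU : U.Finite) (hK : K ⊆ ⋃₀ U) : HasFiniteSubcover K U :=
  ⟨hU.toFinset, by simp, by simpa using hK⟩

theorem coverNum_le_card {F : Finset (Set X)} (hFU : ↑F ⊆ U) (hF : K ⊆ ⋃₀ ↑F) :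
    coverNum K U ≤ F.card :=
  Nat.sInf_le ⟨F, hFU, rfl, hF⟩

theorem HasFiniteSubcover.exists_card_eq_coverNum (h : HasFiniteSubcover K U) :
    ∃ F : Finset (Set X), ↑F ⊆ U ∧ F.card = coverNum K U ∧ K ⊆ ⋃₀ ↑F :=
  let ⟨F, hFU, hF⟩ := h
  Nat.sInf_mem (s := {n | ∃ F : Finset (Set X), (F : Set (Set X)) ⊆ U ∧ F.card = n ∧ K ⊆ ⋃₀ ↑F})
    ⟨F.card, F, hFU, rfl, hF⟩

theorem coverNum_le_of_forall_exists {K' : Set Y} {U' : Set (Set Y)}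
    (h : HasFiniteSubcover K U)
    (hF : ∀ F : Finset (Set X), ↑F ⊆ U → K ⊆ ⋃₀ ↑F →
      ∃ F' : Finset (Set Y), ↑F' ⊆ U' ∧ F'.card ≤ F.card ∧ K' ⊆ ⋃₀ ↑F') :
    coverNum K' U' ≤ coverNum K U := by
  obtain ⟨F, hFU, hcard, hFK⟩ := h.exists_card_eq_coverNum
  obtain ⟨F', hF'U, hle, hF'K⟩ := hF F hFU hFK
  exact (coverNum_le_card hF'U hF'K).trans (hcard ▸ hle)

theorem coverNum_mono_left (hKK' : K ⊆ K') (h : HasFiniteSubcover K' U) :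
    coverNum K U ≤ coverNum K' U :=
  coverNum_le_of_forall_exists h fun F hFU hF => ⟨F, hFU, le_rfl, hKK'.trans hF⟩

theorem coverNum_le_of_refines (hV : HasFiniteSubcover K V) (h : ∀ v ∈ V, ∃ u ∈ U, v ⊆ u) :
    coverNum K U ≤ coverNum K V := by
  refine coverNum_le_of_forall_exists hV fun F hFV hF => ?_
  choose! g hgU hvg using h
  refine ⟨F.image g, ?_, Finset.card_image_le, ?_⟩
  · simpa [Set.subset_def] using fun v hv => hgU v (hFV hv)
  · intro x hx
    obtain ⟨v, hvF, hxv⟩ := hF hx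
    exact ⟨g v, Finset.mem_image_of_mem g hvF, hvg v (hFV hvF) hxv⟩

theorem one_le_coverNum (hK : K.Nonempty) (h : HasFiniteSubcover K U) : 1 ≤ coverNum K U := by
  obtain ⟨F, -, hcard, hF⟩ := h.exists_card_eq_coverNum
  obtain ⟨x, hx⟩ := hK
  obtain ⟨v, hvF, -⟩ := hF hx
  exact hcard ▸ Finset.card_pos.mpr ⟨v, hvF⟩

theorem subset_sUnion_image_preimage (f : X → Y) {F : Finset (Set Y)} (hF : f '' K ⊆ ⋃₀ ↑F) :
    K ⊆ ⋃₀ ↑(F.image (Set.preimage f)) := fun x hx =>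
  let ⟨w, hwF, hxw⟩ := hF (Set.mem_image_of_mem f hx)
  ⟨f ⁻¹' w, by simpa using ⟨w, hwF, rfl⟩, hxw⟩

theorem HasFiniteSubcover.preimage (f : X → Y) {W : Set (Set Y)}
    (h : HasFiniteSubcover (f '' K) W) : HasFiniteSubcover K (Set.preimage f '' W) :=
  let ⟨F, hFW, hF⟩ := h
  ⟨F.image (Set.preimage f), by simpa using Set.image_mono hFW, subset_sUnion_image_preimage f hF⟩

theorem coverNum_preimage_image (f : X → Y) {W : Set (Set Y)}
    (h : HasFiniteSubcover (f '' K) W) :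
    coverNum K (Set.preimage f '' W) = coverNum (f '' K) W := by
  refine le_antisymm (coverNum_le_of_forall_exists h fun F hFW hF => ?_)
    (coverNum_le_of_forall_exists (h.preimage f) fun F hFW hF => ?_)
  · exact ⟨F.image (Set.preimage f), by simpa using Set.image_mono hFW, Finset.card_image_le,
      subset_sUnion_image_preimage f hF⟩
  · choose! g hgW hg using fun s (hs : s ∈ F) => hFW hs
    refine ⟨F.image g, by simpa [Set.subset_def] using hgW, Finset.card_image_le, ?_⟩
    rintro _ ⟨x, hx, rfl⟩
    obtain ⟨s, hsF, hxs⟩ := hF hx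
    exact ⟨g s, Finset.mem_image_of_mem g hsF, by rwa [← hg s hsF] at hxs⟩

end CoverNum

section GrowthRate

open ENNReal

def growthRate (a : ℕ → ℕ) : ℝ≥0∞ :=
  limsup (fun n => ENNReal.ofReal (Real.log (a n) / n)) atTop

theorem Real.log_natCast_le_log_natCast {m n : ℕ} (h : m ≤ n) : Real.log m ≤ Real.log n := by
  rcases m.eq_zero_or_pos with rfl | hm
  · simpa using Real.log_natCast_nonneg n
  · exact Real.log_le_log (by exact_mod_cast hm) (by exact_mod_cast h)

theorem growthRate_le_of_le_add {a b : ℕ → ℕ} (K : ℕ) (h : ∀ n, a n ≤ b (n + K)) :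
    growthRate a ≤ growthRate b := by
  set u : ℕ → ℝ≥0∞ := fun n => ENNReal.ofReal (Real.log (b (n + K)) / ↑(n + K))
  set v : ℕ → ℝ≥0∞ := fun n => ENNReal.ofReal (1 + K / n)
  have hv : Tendsto v atTop (𝓝 1) := by
    simpa using ENNReal.tendsto_ofReal ((tendsto_const_div_atTop_nhds_zero_nat (K : ℝ)).const_add 1)
  have hle : ∀ n : ℕ, ENNReal.ofReal (Real.log (a n) / n) ≤ u n * v n := by
    intro n
    rcases n.eq_zero_or_pos with rfl | hn
    · simp
    have hlog := Real.log_natCast_le_log_natCast (h n)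
    rw [← ENNReal.ofReal_mul (by positivity)]
    refine ENNReal.ofReal_le_ofReal ?_
    calc Real.log (a n) / n ≤ Real.log (b (n + K)) / n := by gcongr
      _ = _ := by push_cast; field_simp
  calc growthRate a ≤ limsup (u * v) atTop := limsup_le_limsup (Eventually.of_forall hle)
    _ ≤ limsup u atTop * limsup v atTop :=
      ENNReal.limsup_mul_le' (by simp [hv.limsup_eq]) (by simp [hv.limsup_eq])
    _ = growthRate b := by
      rw [hv.limsup_eq, mul_one]
      exact limsup_nat_add (fun n => ENNReal.ofReal (Real.log (b n) / n)) K

theorem log_le_of_le_pow_mul {a : ℕ → ℕ} {b p t₀ : ℕ} (hp : 0 < p) (ha : ∀ n, 1 ≤ a n)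
    (h : ∀ r t, t₀ ≤ t → a (r * p + t) ≤ b ^ r * a t) {n : ℕ} (hn : t₀ ≤ n) :
    Real.log (a n) ≤ n / p * Real.log b + ∑ t ∈ Finset.range (t₀ + p), Real.log (a t) := by
  obtain ⟨r, t, ht₀, ht, hn_eq⟩ : ∃ r t, t₀ ≤ t ∧ t < t₀ + p ∧ n = r * p + t :=
    ⟨(n - t₀) / p, t₀ + (n - t₀) % p, by omega, by have := Nat.mod_lt (n - t₀) hp; omega,
      by have := Nat.div_add_mod' (n - t₀) p; omega⟩
  have hbound := h r t ht₀
  rw [← hn_eq] at hbound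
  have hprod : b ^ r * a t ≠ 0 := by have := ha n; omega
  have hlog_t : Real.log (a t) ≤ ∑ t ∈ Finset.range (t₀ + p), Real.log (a t) :=
    Finset.single_le_sum (fun i _ => Real.log_natCast_nonneg (a i)) (Finset.mem_range.mpr ht)
  have hr : (r : ℝ) ≤ n / p := by
    rw [le_div_iff₀ (by exact_mod_cast hp)]
    exact_mod_cast (show r * p ≤ n by omega)
  calc Real.log (a n) ≤ Real.log ((b ^ r * a t : ℕ) : ℝ) := Real.log_natCast_le_log_natCast hbound
    _ = r * Real.log b + Real.log (a t) := by
      push_cast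
      rw [Real.log_mul (by exact_mod_cast (mul_ne_zero_iff.mp hprod).1)
        (by exact_mod_cast (mul_ne_zero_iff.mp hprod).2), Real.log_pow]
    _ ≤ n / p * Real.log b + ∑ t ∈ Finset.range (t₀ + p), Real.log (a t) := by gcongr

theorem growthRate_le_of_le_pow_mul {a : ℕ → ℕ} {b p t₀ : ℕ} (hp : 0 < p) (ha : ∀ n, 1 ≤ a n)
    (h : ∀ r t, t₀ ≤ t → a (r * p + t) ≤ b ^ r * a t) :
    growthRate a ≤ ENNReal.ofReal (Real.log b / p) := by
  set C := ∑ t ∈ Finset.range (t₀ + p), Real.log (a t)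
  have hev : ∀ᶠ n : ℕ in atTop, ENNReal.ofReal (Real.log (a n) / n) ≤
      ENNReal.ofReal (Real.log b / p) + ENNReal.ofReal (C / n) := by
    filter_upwards [eventually_ge_atTop (max t₀ 1)] with n hn
    have hn0 : (0 : ℝ) < n := by exact_mod_cast (le_of_max_le_right hn)
    refine (ENNReal.ofReal_le_ofReal ?_).trans ENNReal.ofReal_add_le
    rw [div_le_iff₀ hn0, add_mul, div_mul_cancel₀ _ hn0.ne']
    calc Real.log (a n) ≤ n / p * Real.log b + C :=
          log_le_of_le_pow_mul hp ha h (le_of_max_le_left hn)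
      _ = Real.log b / p * n + C := by ring
  have hlim : Tendsto (fun n : ℕ => ENNReal.ofReal (Real.log b / p) + ENNReal.ofReal (C / n))
      atTop (𝓝 (ENNReal.ofReal (Real.log b / p))) := by
    simpa using tendsto_const_nhds.add
      (ENNReal.tendsto_ofReal (tendsto_const_div_atTop_nhds_zero_nat C))
  exact (limsup_le_limsup hev).trans hlim.limsup_eq.le

theorem le_growthRate_of_forall_le {x : ℝ≥0∞} {b : ℕ → ℕ}
    (h : ∀ m, x ≤ ENNReal.ofReal (Real.log (b m) / ↑(m + 1))) : x ≤ growthRate b := by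
  refine le_limsup_of_frequently_le ((eventually_ge_atTop 1).mono fun n hn => ?_).frequently
    (by isBoundedDefault)
  refine (h n).trans (ENNReal.ofReal_le_ofReal ?_)
  exact div_le_div_of_nonneg_left (Real.log_natCast_nonneg _) (by exact_mod_cast hn)
    (by push_cast; linarith)

end GrowthRate

section GridCover

variable {α : Finset (Set unitInterval)}

theorem sUnion_gridCover (hα : ⋃₀ (α : Set (Set unitInterval)) = univ) (k : ℕ) :
    ⋃₀ gridCover α k = univ := by
  refine Set.eq_univ_of_forall fun x => ?_
  choose f hf hxf using fun i => (hα ▸ Set.mem_univ (x i) : x i ∈ ⋃₀ (α : Set (Set unitInterval)))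
  exact ⟨_, ⟨f, hf, rfl⟩, hxf⟩

theorem hasFiniteSubcover_gridCover (hα : ⋃₀ (α : Set (Set unitInterval)) = univ) (k : ℕ)
    (K : Set (Fin k → unitInterval)) : HasFiniteSubcover K (gridCover α k) := by
  refine Set.Finite.hasFiniteSubcover
    ((Set.finite_range fun f : Fin k → α => {x | ∀ i, x i ∈ (f i).1}).subset ?_)
    (sUnion_gridCover hα k ▸ Set.subset_univ K)
  rintro _ ⟨f, hf, rfl⟩
  exact ⟨fun i => ⟨f i, hf i⟩, rfl⟩

theorem isOpen_of_mem_gridCover (hα : ∀ u ∈ α, IsOpen u) {k : ℕ}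
    {s : Set (Fin k → unitInterval)} (hs : s ∈ gridCover α k) : IsOpen s := by
  obtain ⟨f, hf, rfl⟩ := hs
  simpa [Set.pi] using isOpen_set_pi Set.finite_univ fun i _ => hα _ (hf i)

theorem append_mem_gridCover {p q : ℕ} {s : Set (Fin p → unitInterval)}
    {t : Set (Fin q → unitInterval)} (hs : s ∈ gridCover α p) (ht : t ∈ gridCover α q) :
    {x : Fin (p + q) → unitInterval |
      (fun i => x (Fin.castAdd q i)) ∈ s ∧ (fun j => x (Fin.natAdd p j)) ∈ t} ∈
      gridCover α (p + q) := by
  obtain ⟨f, hf, rfl⟩ := hs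
  obtain ⟨g, hg, rfl⟩ := ht
  refine ⟨Fin.append f g, Fin.addCases (by simpa using hf) (by simpa using hg), ?_⟩
  ext x
  simp [Fin.forall_fin_add]

theorem coverNum_le_mul_of_append (hα : ⋃₀ (α : Set (Set unitInterval)) = univ) {p q : ℕ}
    {S : Set (Fin (p + q) → unitInterval)} {A : Set (Fin p → unitInterval)}
    {B : Set (Fin q → unitInterval)}
    (hS : ∀ x ∈ S, (fun i => x (Fin.castAdd q i)) ∈ A ∧ (fun j => x (Fin.natAdd p j)) ∈ B) :
    coverNum S (gridCover α (p + q)) ≤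
      coverNum A (gridCover α p) * coverNum B (gridCover α q) := by
  obtain ⟨FA, hFA, hcardA, hA⟩ := (hasFiniteSubcover_gridCover hα p A).exists_card_eq_coverNum
  obtain ⟨FB, hFB, hcardB, hB⟩ := (hasFiniteSubcover_gridCover hα q B).exists_card_eq_coverNum
  set box : Set (Fin p → unitInterval) × Set (Fin q → unitInterval) →
      Set (Fin (p + q) → unitInterval) := fun st =>
    {x | (fun i => x (Fin.castAdd q i)) ∈ st.1 ∧ (fun j => x (Fin.natAdd p j)) ∈ st.2}
  have hsub : ↑((FA ×ˢ FB).image box) ⊆ gridCover α (p + q) := by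
    intro s hs
    obtain ⟨⟨s₁, s₂⟩, hst, rfl⟩ := Finset.mem_image.mp hs
    obtain ⟨h₁, h₂⟩ := Finset.mem_product.mp hst
    exact append_mem_gridCover (hFA h₁) (hFB h₂)
  have hcov : S ⊆ ⋃₀ ↑((FA ×ˢ FB).image box) := by
    intro x hx
    obtain ⟨s₁, hs₁, hx₁⟩ := hA (hS x hx).1
    obtain ⟨s₂, hs₂, hx₂⟩ := hB (hS x hx).2
    exact ⟨box (s₁, s₂), Finset.mem_image_of_mem box (Finset.mem_product.mpr ⟨hs₁, hs₂⟩),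
      hx₁, hx₂⟩
  calc coverNum S (gridCover α (p + q)) ≤ ((FA ×ˢ FB).image box).card := coverNum_le_card hsub hcov
    _ ≤ (FA ×ˢ FB).card := Finset.card_image_le
    _ = _ := by rw [Finset.card_product, hcardA, hcardB]

end GridCover

section Prefixes

variable {X : Type*} {G : Set (unitInterval × unitInterval)}

def seqPrefix (n : ℕ) (x : ℕ → X) : Fin (n + 1) → X := fun i => x i

@[fun_prop]
theorem continuous_seqPrefix [TopologicalSpace X] (n : ℕ) : Continuous (seqPrefix (X := X) n) :=
  continuous_pi fun _ => continuous_apply _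

theorem exists_seqPrefix_eq {N : ℕ} (y : Fin (N + 1) → X) : ∃ z : ℕ → X, seqPrefix N z = y :=
  ⟨fun i => y ⟨min i N, by omega⟩, funext fun i => congrArg y (Fin.ext (min_eq_left (by omega)))⟩

theorem isClosed_mahavierFin (hG : IsClosed G) (n : ℕ) : IsClosed (MahavierFin G n) := by
  simp only [MahavierFin, Set.ofPred_forall]
  exact isClosed_iInter fun i => hG.preimage (by fun_prop)

theorem isClosed_mahavierInf (hG : IsClosed G) : IsClosed (MahavierInf G) := by
  simp only [MahavierInf, Set.ofPred_forall]
  exact isClosed_iInter fun i => hG.preimage (by fun_prop)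

theorem seqPrefix_mem_mahavierFin {x : ℕ → unitInterval} (hx : x ∈ MahavierInf G) (n : ℕ) :
    seqPrefix n x ∈ MahavierFin G n :=
  fun i => hx i

def prefixSet (G : Set (unitInterval × unitInterval)) (n : ℕ) :
    Set (Fin (n + 1) → unitInterval) :=
  seqPrefix n '' MahavierInf G

/-- Paths of `m` steps in `G` that extend by `k + 1` further steps. -/
def extendablePaths (G : Set (unitInterval × unitInterval)) (m k : ℕ) :
    Set (Fin (m + 1) → unitInterval) :=
  (fun y i => y (Fin.castAdd (k + 1) i)) '' MahavierFin G (m + 1 + k)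

theorem prefixSet_subset_mahavierFin (n : ℕ) : prefixSet G n ⊆ MahavierFin G n := by
  rintro _ ⟨x, hx, rfl⟩
  exact seqPrefix_mem_mahavierFin hx n

theorem prefixSet_subset_extendablePaths (m k : ℕ) : prefixSet G m ⊆ extendablePaths G m k := by
  rintro _ ⟨x, hx, rfl⟩
  exact ⟨seqPrefix (m + 1 + k) x, seqPrefix_mem_mahavierFin hx _, rfl⟩

theorem antitone_extendablePaths (m : ℕ) : Antitone (extendablePaths G m) := by
  intro k k' hk _ ⟨y, hy, hyx⟩
  exact ⟨fun i => y (Fin.castLE (by omega) i), fun i => hy (Fin.castLE (by omega) i), hyx⟩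

theorem isCompact_extendablePaths (hG : IsClosed G) (m k : ℕ) :
    IsCompact (extendablePaths G m k) :=
  (isClosed_mahavierFin hG _).isCompact.image (by fun_prop)

theorem iInter_extendablePaths (hG : IsClosed G) (m : ℕ) :
    ⋂ k, extendablePaths G m k = prefixSet G m := by
  refine Set.Subset.antisymm (fun x hx => ?_)
    (Set.subset_iInter (prefixSet_subset_extendablePaths m))
  set C : ℕ → Set (ℕ → unitInterval) := fun k =>
    seqPrefix m ⁻¹' {x} ∩ {z | ∀ i < m + 1 + k, (z i, z (i + 1)) ∈ G}
  have hC_closed : ∀ k, IsClosed (C k) := fun k =>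
    (isClosed_singleton.preimage (continuous_seqPrefix m)).inter <| by
      simp only [Set.ofPred_forall]
      exact isClosed_iInter fun i => isClosed_iInter fun _ => hG.preimage (by fun_prop)
  have hC_nonempty : ∀ k, (C k).Nonempty := fun k => by
    obtain ⟨y, hy, rfl⟩ := Set.mem_iInter.mp hx k
    obtain ⟨z, rfl⟩ := exists_seqPrefix_eq y
    exact ⟨z, rfl, fun i hi => hy ⟨i, hi⟩⟩
  have hC_anti : Antitone C := fun k k' hk z hz => ⟨hz.1, fun i hi => hz.2 i (by omega)⟩
  obtain ⟨z, hz⟩ := IsCompact.nonempty_iInter_of_directed_nonempty_isCompact_isClosed C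
    hC_anti.directed_ge hC_nonempty (fun k => (hC_closed k).isCompact) hC_closed
  simp only [Set.mem_iInter] at hz
  exact ⟨z, fun i => (hz i).2 i (by omega), (hz 0).1⟩

theorem exists_extendablePaths_subset (hG : IsClosed G) {m : ℕ}
    {O : Set (Fin (m + 1) → unitInterval)} (hO : IsOpen O) (hPO : prefixSet G m ⊆ O) :
    ∃ k, extendablePaths G m k ⊆ O :=
  exists_subset_nhds_of_isCompact (antitone_extendablePaths m).directed_ge
    (isCompact_extendablePaths hG m) fun _ hx =>
      hO.mem_nhds (hPO (iInter_extendablePaths hG m ▸ hx))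

end Prefixes

section MahavierCoverNum

variable {G : Set (unitInterval × unitInterval)} {α : Finset (Set unitInterval)}

/-- `N(⋆_{i=1}^n G, α^{n+1})`. -/
def mahavierCoverNum (G : Set (unitInterval × unitInterval)) (α : Finset (Set unitInterval))
    (n : ℕ) : ℕ :=
  coverNum (MahavierFin G n) (gridCover α (n + 1))

def prefixCoverNum (G : Set (unitInterval × unitInterval)) (α : Finset (Set unitInterval))
    (n : ℕ) : ℕ :=
  coverNum (prefixSet G n) (gridCover α (n + 1))

theorem one_le_mahavierCoverNum (hne : (MahavierInf G).Nonempty)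
    (hα : ⋃₀ (α : Set (Set unitInterval)) = univ) (n : ℕ) : 1 ≤ mahavierCoverNum G α n :=
  let ⟨_, hx⟩ := hne
  one_le_coverNum ⟨_, seqPrefix_mem_mahavierFin hx n⟩ (hasFiniteSubcover_gridCover hα _ _)

theorem prefixCoverNum_le_mahavierCoverNum (hα : ⋃₀ (α : Set (Set unitInterval)) = univ)
    (n : ℕ) : prefixCoverNum G α n ≤ mahavierCoverNum G α n :=
  coverNum_mono_left (prefixSet_subset_mahavierFin n) (hasFiniteSubcover_gridCover hα _ _)

theorem mahavierCoverNum_add_le (hα : ⋃₀ (α : Set (Set unitInterval)) = univ) (m t : ℕ) :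
    mahavierCoverNum G α (m + 1 + t) ≤
      coverNum (extendablePaths G m t) (gridCover α (m + 1)) * mahavierCoverNum G α t :=
  coverNum_le_mul_of_append (p := m + 1) (q := t + 1) hα fun x hx =>
    ⟨⟨x, hx, rfl⟩, fun j => hx ⟨m + 1 + j, by omega⟩⟩

/-- By compactness, `extendablePaths G m k` eventually lies in the union of a minimal cover of
`prefixSet G m`. -/
theorem exists_coverNum_extendablePaths_le (hG : IsClosed G)
    (hαo : ∀ u ∈ α, IsOpen u) (hα : ⋃₀ (α : Set (Set unitInterval)) = univ) (m : ℕ) :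
    ∃ k₀, ∀ k, k₀ ≤ k →
      coverNum (extendablePaths G m k) (gridCover α (m + 1)) ≤ prefixCoverNum G α m := by
  obtain ⟨F, hFU, hcard, hF⟩ :=
    (hasFiniteSubcover_gridCover hα (m + 1) (prefixSet G m)).exists_card_eq_coverNum
  obtain ⟨k₀, hk₀⟩ := exists_extendablePaths_subset hG
    (isOpen_sUnion fun s hs => isOpen_of_mem_gridCover hαo (hFU hs)) hF
  exact ⟨k₀, fun k hk =>
    (coverNum_le_card hFU ((antitone_extendablePaths m hk).trans hk₀)).trans hcard.le⟩

theorem mahavierCoverNum_le_pow_mul (hα : ⋃₀ (α : Set (Set unitInterval)) = univ) {m k₀ : ℕ}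
    (hk₀ : ∀ k, k₀ ≤ k →
      coverNum (extendablePaths G m k) (gridCover α (m + 1)) ≤ prefixCoverNum G α m)
    (r t : ℕ) (ht : k₀ ≤ t) :
    mahavierCoverNum G α (r * (m + 1) + t) ≤ prefixCoverNum G α m ^ r * mahavierCoverNum G α t := by
  induction r with
  | zero => simp
  | succ r ih =>
    calc mahavierCoverNum G α ((r + 1) * (m + 1) + t)
        = mahavierCoverNum G α (m + 1 + (r * (m + 1) + t)) := by congr 1; ring
      _ ≤ prefixCoverNum G α m * (prefixCoverNum G α m ^ r * mahavierCoverNum G α t) :=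
        (mahavierCoverNum_add_le hα m _).trans
          (Nat.mul_le_mul (hk₀ _ (ht.trans (Nat.le_add_left _ _))) ih)
      _ = prefixCoverNum G α m ^ (r + 1) * mahavierCoverNum G α t := by ring

theorem growthRate_mahavierCoverNum_le (hG : IsClosed G) (hne : (MahavierInf G).Nonempty)
    (hαo : ∀ u ∈ α, IsOpen u) (hα : ⋃₀ (α : Set (Set unitInterval)) = univ) (m : ℕ) :
    growthRate (mahavierCoverNum G α) ≤
      ENNReal.ofReal (Real.log (prefixCoverNum G α m) / ↑(m + 1)) :=
  let ⟨_, hk₀⟩ := exists_coverNum_extendablePaths_le hG hαo hα m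
  growthRate_le_of_le_pow_mul m.succ_pos (one_le_mahavierCoverNum hne hα)
    (mahavierCoverNum_le_pow_mul hα hk₀)

end MahavierCoverNum

section Shift

variable {G : Set (unitInterval × unitInterval)} {α : Finset (Set unitInterval)}

def cylinderCover (G : Set (unitInterval × unitInterval)) (α : Finset (Set unitInterval))
    (n : ℕ) : Set (Set (MahavierInf G)) :=
  Set.preimage (fun z : MahavierInf G => seqPrefix n z.1) '' gridCover α (n + 1)

theorem hasFiniteSubcover_cylinderCover (hα : ⋃₀ (α : Set (Set unitInterval)) = univ) (n : ℕ) :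
    HasFiniteSubcover univ (cylinderCover G α n) :=
  (hasFiniteSubcover_gridCover hα _ _).preimage _

theorem isOpenCover_cylinderCover (hαo : ∀ u ∈ α, IsOpen u)
    (hα : ⋃₀ (α : Set (Set unitInterval)) = univ) (n : ℕ) :
    IsOpenCover (cylinderCover G α n) := by
  refine ⟨?_, Set.eq_univ_of_forall fun z => ?_⟩
  · rintro _ ⟨s, hs, rfl⟩
    exact (isOpen_of_mem_gridCover hαo hs).preimage (by fun_prop)
  · obtain ⟨s, hs, hzs⟩ := sUnion_gridCover hα (n + 1) ▸ Set.mem_univ (seqPrefix n z.1)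
    exact ⟨_, ⟨s, hs, rfl⟩, hzs⟩

theorem coverNum_cylinderCover (hα : ⋃₀ (α : Set (Set unitInterval)) = univ) (n : ℕ) :
    coverNum univ (cylinderCover G α n) = prefixCoverNum G α n := by
  have himage : (fun z : MahavierInf G => seqPrefix n z.1) '' univ = prefixSet G n := by
    rw [Set.image_univ, Set.range_comp', Subtype.range_coe]
    rfl
  rw [cylinderCover, coverNum_preimage_image _ (himage ▸ hasFiniteSubcover_gridCover hα _ _),
    himage, prefixCoverNum]

variable {T : MahavierInf G → MahavierInf G}

theorem iterate_apply_eq_of_shift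
    (hT : ∀ z : MahavierInf G, (T z : ℕ → unitInterval) = shiftMap ↑z)
    (i : ℕ) (z : MahavierInf G) (j : ℕ) :
    (T^[i] z : ℕ → unitInterval) j = (z : ℕ → unitInterval) (i + j) := by
  induction i generalizing z with
  | zero => simp
  | succ i ih =>
    rw [Function.iterate_succ_apply, ih, hT, shiftMap, Nat.add_right_comm]

theorem dynJoin_cylinderCover_zero
    (hT : ∀ z : MahavierInf G, (T z : ℕ → unitInterval) = shiftMap ↑z) (n : ℕ) :
    dynJoin T (cylinderCover G α 0) n = cylinderCover G α n := by
  ext s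
  constructor
  · rintro ⟨f, hf, rfl⟩
    choose b hb hfb using hf
    choose g hg hbg using hb
    refine ⟨_, ⟨fun j => g j 0, fun j => hg j 0, rfl⟩, ?_⟩
    ext z
    simp [← hfb, hbg, seqPrefix, iterate_apply_eq_of_shift hT, Fin.forall_fin_one]
  · rintro ⟨_, ⟨f, hf, rfl⟩, rfl⟩
    refine ⟨fun j => _, fun j => ⟨_, ⟨fun _ => f j, fun _ => hf j, rfl⟩, rfl⟩, ?_⟩
    ext z
    simp [seqPrefix, iterate_apply_eq_of_shift hT]

theorem cylinderCover_add_refines_dynJoin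
    (hT : ∀ z : MahavierInf G, (T z : ℕ → unitInterval) = shiftMap ↑z)
    {U : Set (Set (MahavierInf G))} {K : ℕ} (hK : ∀ v ∈ cylinderCover G α K, ∃ u ∈ U, v ⊆ u)
    (n : ℕ) :
    ∀ s ∈ cylinderCover G α (n + K), ∃ s' ∈ dynJoin T U n, s ⊆ s' := by
  rintro _ ⟨_, ⟨f, hf, rfl⟩, rfl⟩
  choose u hu hsub using fun j : Fin (n + 1) =>
    hK _ ⟨_, ⟨fun i : Fin (K + 1) => f ⟨j + i, by omega⟩, fun _ => hf _, rfl⟩, rfl⟩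
  refine ⟨⋂ j : Fin (n + 1), T^[j] ⁻¹' u j, ⟨u, hu, rfl⟩,
    fun z hz => Set.mem_iInter.mpr fun j => hsub j fun i => ?_⟩
  simp only [seqPrefix, iterate_apply_eq_of_shift hT]
  exact hz ⟨j + i, by omega⟩

end Shift

section FineCovers

open scoped Uniformity

theorem exists_forall_dist_lt_of_mem_uniformity_pi {X : Type*} [PseudoMetricSpace X]
    {W : Set ((ℕ → X) × (ℕ → X))} (hW : W ∈ 𝓤 (ℕ → X)) :
    ∃ K, ∃ δ > 0, ∀ x y : ℕ → X, (∀ i ≤ K, dist (x i) (y i) < δ) → (x, y) ∈ W := by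
  rw [Pi.uniformity] at hW
  obtain ⟨J, hJ, V, hV, hVuniv, -, rfl⟩ := mem_iInf'.mp hW
  choose N _ hN using fun i =>
    (Metric.uniformity_basis_dist_inv_nat_succ.comap _).mem_iff.mp (hV i)
  obtain ⟨K, hK⟩ := hJ.bddAbove
  refine ⟨K, 1 / ((Finset.range (K + 1)).sup N + 1), by positivity,
    fun x y hxy => Set.mem_iInter.mpr fun i => ?_⟩
  by_cases hi : i ∈ J
  · refine hN i ((hxy i (hK hi)).trans_le ?_)
    gcongr
    exact_mod_cast Finset.le_sup (Finset.mem_range.mpr (Nat.lt_succ_of_le (hK hi)))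
  · exact hVuniv i hi ▸ Set.mem_univ _

theorem exists_forall_dist_lt_mem_of_isOpenCover {X : Type*} [PseudoMetricSpace X]
    {S : Set (ℕ → X)} (hS : IsCompact S) {U : Set (Set S)} (hU : IsOpenCover U) :
    ∃ K, ∃ δ > 0, ∀ z₀ : S, ∃ u ∈ U, ∀ z : S, (∀ i ≤ K, dist (z₀.1 i) (z.1 i) < δ) → z ∈ u := by
  have := isCompact_iff_compactSpace.mp hS
  obtain ⟨V, ⟨W, hW, hWV⟩, hVU⟩ := lebesgue_number_lemma (U := fun u : U => (u : Set S))
    isCompact_univ (fun u => hU.1 u u.2) (by rw [← Set.sUnion_eq_iUnion, hU.2])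
  obtain ⟨K, δ, hδ, hKδ⟩ := exists_forall_dist_lt_of_mem_uniformity_pi hW
  refine ⟨K, δ, hδ, fun z₀ => ?_⟩
  obtain ⟨u, hu⟩ := hVU z₀ (Set.mem_univ _)
  exact ⟨u, u.2, fun z hz => hu (hWV (hKδ _ _ hz))⟩

theorem ordConnected_ball_unitInterval (c : unitInterval) (r : ℝ) :
    (Metric.ball c r).OrdConnected :=
  (Real.ball_eq_Ioo (c : ℝ) r ▸ Set.ordConnected_Ioo).preimage_mono (Subtype.mono_coe _)

theorem exists_isMinimalIntervalCover_dist_lt {δ : ℝ} (hδ : 0 < δ) :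
    ∃ α, IsMinimalIntervalCover α ∧ ∀ s ∈ α, ∀ x ∈ s, ∀ y ∈ s, dist x y < δ := by
  obtain ⟨t, -, ht, hcover⟩ :=
    finite_cover_balls_of_compact (isCompact_univ (X := unitInterval)) (half_pos hδ)
  set β : Finset (Set unitInterval) := ht.toFinset.image (Metric.ball · (δ / 2))
  have hβ : ⋃₀ (β : Set (Set unitInterval)) = univ := by
    refine Set.eq_univ_of_forall fun x => ?_
    obtain ⟨c, hc, hxc⟩ := Set.mem_iUnion₂.mp (hcover (Set.mem_univ x))
    exact ⟨_, Finset.mem_image_of_mem _ (ht.mem_toFinset.mpr hc), hxc⟩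
  obtain ⟨α, hαβ, hmin⟩ := exists_minimal_le_of_wellFoundedLT
    (fun γ : Finset (Set unitInterval) => ⋃₀ (γ : Set (Set unitInterval)) = univ) β hβ
  have hball : ∀ s ∈ α, ∃ c, s = Metric.ball c (δ / 2) := fun s hs => by
    obtain ⟨c, -, rfl⟩ := Finset.mem_image.mp (hαβ hs)
    exact ⟨c, rfl⟩
  refine ⟨α, ⟨fun s hs => ?_, hmin.1, fun γ hγ hγcov => le_antisymm hγ (hmin.2 hγcov hγ)⟩,
    fun s hs x hx y hy => ?_⟩
  · obtain ⟨c, rfl⟩ := hball s hs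
    exact ⟨Metric.isOpen_ball, ordConnected_ball_unitInterval c _⟩
  · obtain ⟨c, rfl⟩ := hball s hs
    calc dist x y ≤ dist x c + dist y c := dist_triangle_right _ _ _
      _ < δ / 2 + δ / 2 := add_lt_add hx hy
      _ = δ := add_halves δ

theorem exists_cylinderCover_refines {G : Set (unitInterval × unitInterval)} (hG : IsClosed G)
    (hne : (MahavierInf G).Nonempty) {U : Set (Set (MahavierInf G))} (hU : IsOpenCover U) :
    ∃ K α, IsMinimalIntervalCover α ∧ ∀ v ∈ cylinderCover G α K, ∃ u ∈ U, v ⊆ u := by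
  obtain ⟨K, δ, hδ, hKδ⟩ :=
    exists_forall_dist_lt_mem_of_isOpenCover (isClosed_mahavierInf hG).isCompact hU
  obtain ⟨α, hα, hαδ⟩ := exists_isMinimalIntervalCover_dist_lt hδ
  refine ⟨K, α, hα, ?_⟩
  rintro _ ⟨_, ⟨f, hf, rfl⟩, rfl⟩
  rcases Set.eq_empty_or_nonempty ((fun z : MahavierInf G => seqPrefix K z.1) ⁻¹'
    {x | ∀ i, x i ∈ f i}) with h | ⟨z₀, hz₀⟩
  · obtain ⟨z, hz⟩ := hne
    obtain ⟨u, hu, -⟩ := hU.2 ▸ Set.mem_univ (⟨z, hz⟩ : MahavierInf G)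
    exact ⟨u, hu, h ▸ Set.empty_subset u⟩
  · obtain ⟨u, hu, hzu⟩ := hKδ z₀
    exact ⟨u, hu, fun z hz => hzu z fun i hi =>
      hαδ _ (hf ⟨i, by omega⟩) _ (hz₀ ⟨i, by omega⟩) _ (hz ⟨i, by omega⟩)⟩

end FineCovers

section Entropy

variable {G : Set (unitInterval × unitInterval)} {T : MahavierInf G → MahavierInf G}

theorem growthRate_mahavierCoverNum_le_dynJoin
    (hT : ∀ z : MahavierInf G, (T z : ℕ → unitInterval) = shiftMap ↑z) (hG : IsClosed G)
    (hne : (MahavierInf G).Nonempty) {α : Finset (Set unitInterval)} (hαo : ∀ u ∈ α, IsOpen u)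
    (hα : ⋃₀ (α : Set (Set unitInterval)) = univ) :
    growthRate (mahavierCoverNum G α) ≤
      growthRate fun n => coverNum univ (dynJoin T (cylinderCover G α 0) n) :=
  le_growthRate_of_forall_le fun m => by
    rw [dynJoin_cylinderCover_zero hT, coverNum_cylinderCover hα]
    exact growthRate_mahavierCoverNum_le hG hne hαo hα m

theorem exists_growthRate_dynJoin_le
    (hT : ∀ z : MahavierInf G, (T z : ℕ → unitInterval) = shiftMap ↑z) (hG : IsClosed G)
    (hne : (MahavierInf G).Nonempty) {U : Set (Set (MahavierInf G))} (hU : IsOpenCover U) :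
    ∃ α, IsMinimalIntervalCover α ∧
      growthRate (fun n => coverNum univ (dynJoin T U n)) ≤ growthRate (mahavierCoverNum G α) := by
  obtain ⟨K, α, hα, hK⟩ := exists_cylinderCover_refines hG hne hU
  refine ⟨α, hα, growthRate_le_of_le_add K fun n => ?_⟩
  calc coverNum univ (dynJoin T U n) ≤ coverNum univ (cylinderCover G α (n + K)) :=
        coverNum_le_of_refines (hasFiniteSubcover_cylinderCover hα.2.1 _)
          (cylinderCover_add_refines_dynJoin hT hK n)
    _ = prefixCoverNum G α (n + K) := coverNum_cylinderCover hα.2.1 _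
    _ ≤ mahavierCoverNum G α (n + K) := prefixCoverNum_le_mahavierCoverNum hα.2.1 _

end Entropy

theorem ent_eq_akmEntropy_shift_general
    (G : Set (unitInterval × unitInterval)) (hGcl : IsClosed G)
    (hne : (MahavierInf G).Nonempty)
    (T : MahavierInf G → MahavierInf G)
    (hT : ∀ z : MahavierInf G, (T z : ℕ → unitInterval) = shiftMap ↑z) :
    ent G = akmEntropy T := by
  refine le_antisymm (iSup_le fun ⟨α, hα⟩ => ?_) (iSup_le fun ⟨U, hU⟩ => ?_)
  · have hαo : ∀ u ∈ α, IsOpen u := fun u hu => (hα.1 u hu).1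
    calc entOf G α = growthRate (mahavierCoverNum G α) := if_pos hne
      _ ≤ _ := growthRate_mahavierCoverNum_le_dynJoin hT hGcl hne hαo hα.2.1
      _ ≤ akmEntropy T := le_iSup_of_le ⟨_, isOpenCover_cylinderCover hαo hα.2.1 0⟩ le_rfl
  · obtain ⟨α, hα, hle⟩ := exists_growthRate_dynJoin_le hT hGcl hne hU
    exact hle.trans (le_iSup_of_le ⟨α, hα⟩ (if_pos hne).ge)

/-- For closed `G ⊆ [0,1]²` with `𝐆 = ⋆_{i=1}^∞ G ≠ ∅` and `σ(𝐆) = 𝐆`,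
`ent(G)` equals the Adler–Konheim–McAndrew topological entropy of the shift map
restricted to `𝐆`. -/
theorem ent_eq_akmEntropy_shift
    (G : Set (unitInterval × unitInterval)) (hGcl : IsClosed G)
    (hne : (MahavierInf G).Nonempty)
    (hσ : shiftMap '' MahavierInf G = MahavierInf G)
    (T : MahavierInf G → MahavierInf G)
    (hT : ∀ z : MahavierInf G, (T z : ℕ → unitInterval) = shiftMap ↑z) :
    ent G = akmEntropy T :=
  ent_eq_akmEntropy_shift_general G hGcl hne T hT
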